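/- Suppose K ≥ 2 and an M×N real matrix Φ satisfies the RIP of order 3K with isometry constant δ ≤ 0.13/√(log₂ K). Let x ∈ ℝ^N with ‖x‖₀ ≤ K and y = Φx. Consider any run of Regularized Orthogonal Matching Pursuit: Λ⁰ = ∅, and for each iteration ℓ, with x^ℓ the minimizer of ‖y − Φz‖₂ over z supported on Λ^ℓ, r^ℓ = y − Φx^ℓ, and h^ℓ = Φᵀr^ℓ (the algorithm stops when r^ℓ = 0): Ω^ℓ is a set of indices corresponding to the K largest-magnitude entries of h^ℓ (i.e., |Ω^ℓ| = K and |h^ℓ(i)| ≥ |h^ℓ(j)| for all i ∈ Ω^ℓ and j ∉ Ω^ℓ), or Ω^ℓ = supp(h^ℓ) if h^ℓ has fewer than K nonzero entries; Ω₀^ℓ is a subset of Ω^ℓ satisfying |h^ℓ(i)| ≤ 2|h^ℓ(j)| for all i, j ∈ Ω₀^ℓ which maximizes ‖h^ℓ|_Ω‖₂ among all such regularized subsets Ω ⊆ Ω^ℓ; and Λ^{ℓ+1} = Λ^ℓ ∪ Ω₀^ℓ. Then ROMP recovers x exactly from y in at most K iterations: there exists ℓ ≤ K such that supp(x) ⊆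 Λ^ℓ and the least-squares estimate x^ℓ equals x. -/

import Mathlib

/-!
As long as `x` is not recovered, each iteration adds to `Λ` a set `Ω₀` of fresh indices of which
more than three quarters lie in `supp x`. With `v = x - xs` the current error, the correlations
`h = Φᵀ Φ v` vanish on `Λ` (normal equations of least squares), and the RIP makes `h` a proxy for
`v`: `h` has energy at least `(1 - δ)² ‖v‖²` on `supp v`, all of it outside `Λ` and hence captured
by `Ω`, and energy at most `δ² ‖v‖²` on any small set disjoint from `supp v`. Sorting the entries
of `h` on `Ω` into dyadic levels, some level, a regular set, carries a `0.3 / log₂ K` share of the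
energy of `Ω`, and so does the maximal regular set `Ω₀`. Since the entries of a regular set agree
up to a factor `2`, this energy gap becomes a gap in cardinalities. After `K` iterations
`supp x ⊆ Λ` with `|Λ| ≤ 3K`, and the RIP makes the least-squares solution on `Λ` equal to `x`.
-/

noncomputable section

namespace OMP

open Matrix Finset

/-- The support of a vector, as a `Finset`. -/
def supp {n : ℕ} (x : Fin n → ℝ) : Finset (Fin n) :=
  Finset.univ.filter fun j => x j ≠ 0

/-- The Euclidean (ℓ²) norm of a vector. -/
def l2 {n : ℕ} (x : Fin n → ℝ) : ℝ := Real.sqrt (∑ j, x j ^ 2)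

/-- The ℓ^∞ norm of a vector. -/
def linf {n : ℕ} (x : Fin n → ℝ) : ℝ := ⨆ j, |x j|

/-- The standard inner product of two vectors. -/
def dotp {n : ℕ} (x y : Fin n → ℝ) : ℝ := ∑ j, x j * y j

/-- The restriction of a vector to a set of indices (zero elsewhere). -/
def restr {n : ℕ} (Γ : Finset (Fin n)) (x : Fin n → ℝ) : Fin n → ℝ :=
  fun j => if j ∈ Γ then x j else 0

/-- The restricted isometry property of order `K` with isometry constant `δ`. -/
def RIP {M N : ℕ} (K : ℕ) (Φ : Matrix (Fin M) (Fin N) ℝ) (δ : ℝ) : Prop :=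
  0 < δ ∧ δ < 1 ∧ ∀ x : Fin N → ℝ, (supp x).card ≤ K →
    (1 - δ) * l2 x ^ 2 ≤ l2 (Φ.mulVec x) ^ 2 ∧
      l2 (Φ.mulVec x) ^ 2 ≤ (1 + δ) * l2 x ^ 2

/-- The span of the columns of `Φ` indexed by `Λ`, as a submodule of Euclidean space. -/
def colSpan {M N : ℕ} (Φ : Matrix (Fin M) (Fin N) ℝ) (Λ : Finset (Fin N)) :
    Submodule ℝ (EuclideanSpace ℝ (Fin M)) :=
  Submodule.span ℝ ((fun j => (WithLp.equiv 2 (Fin M → ℝ)).symm fun i => Φ i j) '' (Λ : Set (Fin N)))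

/-- Orthogonal projection `P_Λ` onto the span of the columns of `Φ` indexed by `Λ`. -/
def projCol {M N : ℕ} (Φ : Matrix (Fin M) (Fin N) ℝ) (Λ : Finset (Fin N))
    (v : Fin M → ℝ) : Fin M → ℝ :=
  WithLp.equiv 2 (Fin M → ℝ)
    (Submodule.orthogonalProjectionOnto (colSpan Φ Λ) ((WithLp.equiv 2 (Fin M → ℝ)).symm v) : EuclideanSpace ℝ (Fin M))

/-- The matrix `A_Λ = (I - P_Λ) Φ`: the columns of `Φ` orthogonalized against `colSpan Φ Λ`. -/
def Amat {M N : ℕ} (Φ : Matrix (Fin M) (Fin N) ℝ) (Λ : Finset (Fin N)) :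
    Matrix (Fin M) (Fin N) ℝ :=
  Matrix.of fun i j => Φ i j - projCol Φ Λ (fun i' => Φ i' j) i

section Vectors

variable {n : ℕ}

lemma mem_supp {x : Fin n → ℝ} {j : Fin n} : j ∈ supp x ↔ x j ≠ 0 := by
  simp [supp]

lemma supp_add_subset (u v : Fin n → ℝ) : supp (u + v) ⊆ supp u ∪ supp v := by
  intro j
  simp only [mem_supp, Finset.mem_union, Pi.add_apply]
  contrapose!
  rintro ⟨hu, hv⟩
  simp [hu, hv]

lemma supp_sub_subset (u v : Fin n → ℝ) : supp (u - v) ⊆ supp u ∪ supp v := by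
  simpa [sub_eq_add_neg, supp] using supp_add_subset u (-v)

lemma supp_smul_subset (c : ℝ) (u : Fin n → ℝ) : supp (c • u) ⊆ supp u := by
  intro j
  simp only [mem_supp, Pi.smul_apply, smul_eq_mul]
  exact right_ne_zero_of_mul

lemma supp_restr_subset (T : Finset (Fin n)) (u : Fin n → ℝ) : supp (restr T u) ⊆ T := by
  intro j
  simp only [mem_supp, restr]
  split_ifs with hj
  · exact fun _ => hj
  · exact fun h => absurd rfl h

lemma l2_nonneg (x : Fin n → ℝ) : 0 ≤ l2 x := Real.sqrt_nonneg _

lemma l2_sq (x : Fin n → ℝ) : l2 x ^ 2 = ∑ j, x j ^ 2 :=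
  Real.sq_sqrt (Finset.sum_nonneg fun _ _ => sq_nonneg _)

lemma l2_eq_zero_iff {x : Fin n → ℝ} : l2 x = 0 ↔ x = 0 := by
  rw [l2, Real.sqrt_eq_zero (Finset.sum_nonneg fun _ _ => sq_nonneg _),
    Finset.sum_eq_zero_iff_of_nonneg fun _ _ => sq_nonneg _, funext_iff]
  simp

lemma l2_smul (c : ℝ) (x : Fin n → ℝ) : l2 (c • x) = |c| * l2 x := by
  simp only [l2, Pi.smul_apply, smul_eq_mul, mul_pow, ← Finset.mul_sum]
  rw [Real.sqrt_mul (sq_nonneg c), Real.sqrt_sq_eq_abs]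

lemma l2_restr_sq (T : Finset (Fin n)) (x : Fin n → ℝ) :
    l2 (restr T x) ^ 2 = ∑ j ∈ T, x j ^ 2 := by
  rw [l2_sq, ← Finset.sum_subset (Finset.subset_univ T)]
  · exact Finset.sum_congr rfl fun j hj => by simp [restr, hj]
  · intro j _ hj
    simp [restr, hj]

lemma dotp_self (x : Fin n → ℝ) : dotp x x = l2 x ^ 2 := by
  simp only [dotp, l2_sq, ← sq]

lemma dotp_comm (x y : Fin n → ℝ) : dotp x y = dotp y x := by
  simp [dotp, mul_comm]

lemma dotp_le_l2_mul_l2 (x y : Fin n → ℝ) : dotp x y ≤ l2 x * l2 y :=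
  Real.sum_mul_le_sqrt_mul_sqrt _ x y

lemma dotp_smul_left (c : ℝ) (x y : Fin n → ℝ) : dotp (c • x) y = c * dotp x y := by
  simp [dotp, Finset.mul_sum, mul_assoc]

lemma dotp_smul_right (c : ℝ) (x y : Fin n → ℝ) : dotp x (c • y) = c * dotp x y := by
  rw [dotp_comm, dotp_smul_left, dotp_comm]

lemma dotp_restr_left (T : Finset (Fin n)) (x y : Fin n → ℝ) :
    dotp (restr T x) y = ∑ j ∈ T, x j * y j := by
  rw [dotp, ← Finset.sum_subset (Finset.subset_univ T)]
  · exact Finset.sum_congr rfl fun j hj => by simp [restr, hj]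
  · intro j _ hj
    simp [restr, hj]

lemma dotp_eq_zero_of_disjoint {x y : Fin n → ℝ} (h : Disjoint (supp x) (supp y)) :
    dotp x y = 0 := by
  refine Finset.sum_eq_zero fun j _ => ?_
  by_contra hxy
  exact Finset.disjoint_left.1 h (mem_supp.2 (left_ne_zero_of_mul hxy))
    (mem_supp.2 (right_ne_zero_of_mul hxy))

lemma l2_add_sq (x y : Fin n → ℝ) : l2 (x + y) ^ 2 = l2 x ^ 2 + 2 * dotp x y + l2 y ^ 2 := by
  simp only [l2_sq, dotp, Pi.add_apply, add_sq, Finset.sum_add_distrib, Finset.mul_sum, mul_assoc]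

lemma l2_sub_sq (x y : Fin n → ℝ) : l2 (x - y) ^ 2 = l2 x ^ 2 - 2 * dotp x y + l2 y ^ 2 := by
  simp only [l2_sq, dotp, Pi.sub_apply, sub_sq, Finset.sum_add_distrib, Finset.sum_sub_distrib,
    Finset.mul_sum, mul_assoc]

end Vectors

lemma dotp_mulVec_left {M N : ℕ} (Φ : Matrix (Fin M) (Fin N) ℝ) (u : Fin N → ℝ)
    (w : Fin M → ℝ) : dotp (Φ.mulVec u) w = dotp u (Φᵀ.mulVec w) := by
  simp only [dotp, Matrix.mulVec, dotProduct, Matrix.transpose_apply, Finset.sum_mul,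
    Finset.mul_sum]
  rw [Finset.sum_comm]
  exact Finset.sum_congr rfl fun _ _ => Finset.sum_congr rfl fun _ _ => by ring

lemma restr_supp_self {n : ℕ} (x : Fin n → ℝ) : restr (supp x) x = x := by
  funext j
  by_cases hj : x j = 0 <;> simp [restr, mem_supp, hj]

lemma dotp_restr_comm {n : ℕ} (T : Finset (Fin n)) (x y : Fin n → ℝ) :
    dotp (restr T x) y = dotp x (restr T y) := by
  refine Finset.sum_congr rfl fun j _ => ?_
  by_cases hj : j ∈ T <;> simp [restr, hj]

lemma sq_le_sq_of_sq_le_mul {t b : ℝ} (h : t ^ 2 ≤ t * b) :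
    t ^ 2 ≤ b ^ 2 := by
  nlinarith

namespace RIP

variable {M N K : ℕ} {Φ : Matrix (Fin M) (Fin N) ℝ} {δ : ℝ}

lemma two_mul_dotp_sub_le (hΦ : RIP K Φ δ) {u v : Fin N → ℝ}
    (huv : (supp u ∪ supp v).card ≤ K) :
    2 * (dotp (Φ.mulVec u) (Φ.mulVec v) - dotp u v) ≤ δ * (l2 u ^ 2 + l2 v ^ 2) := by
  have hadd := (hΦ.2.2 (u + v) ((Finset.card_le_card (supp_add_subset u v)).trans huv)).2
  have hsub := (hΦ.2.2 (u - v) ((Finset.card_le_card (supp_sub_subset u v)).trans huv)).1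
  rw [Matrix.mulVec_add, l2_add_sq, l2_add_sq] at hadd
  rw [Matrix.mulVec_sub, l2_sub_sq, l2_sub_sq] at hsub
  linarith

lemma dotp_sub_le (hΦ : RIP K Φ δ) {u v : Fin N → ℝ} (huv : (supp u ∪ supp v).card ≤ K) :
    dotp (Φ.mulVec u) (Φ.mulVec v) - dotp u v ≤ δ * l2 u * l2 v := by
  rcases (mul_nonneg (l2_nonneg u) (l2_nonneg v)).eq_or_lt with huv0 | huv0
  · rcases mul_eq_zero.1 huv0.symm with hu | hv
    · rw [hu]
      simp [l2_eq_zero_iff.1 hu, dotp]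
    · rw [hv]
      simp [l2_eq_zero_iff.1 hv, dotp]
  -- polarization applied to the rescaled pair `(‖v‖ u, ‖u‖ v)`, whose norms agree
  have hcard : (supp (l2 v • u) ∪ supp (l2 u • v)).card ≤ K :=
    (Finset.card_le_card (Finset.union_subset_union (supp_smul_subset _ u)
      (supp_smul_subset _ v))).trans huv
  have h := hΦ.two_mul_dotp_sub_le hcard
  rw [Matrix.mulVec_smul, Matrix.mulVec_smul, dotp_smul_left, dotp_smul_right, dotp_smul_left,
    dotp_smul_right, l2_smul, l2_smul, abs_of_nonneg (l2_nonneg _),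
    abs_of_nonneg (l2_nonneg _)] at h
  refine le_of_mul_le_mul_left ?_ huv0
  linarith

lemma one_sub_sq_mul_le_sum_sq (hΦ : RIP K Φ δ) {v : Fin N → ℝ} (hv : (supp v).card ≤ K) :
    (1 - δ) ^ 2 * l2 v ^ 2 ≤ ∑ j ∈ supp v, (Φᵀ.mulVec (Φ.mulVec v)) j ^ 2 := by
  set h := Φᵀ.mulVec (Φ.mulVec v)
  have hlow : (1 - δ) * l2 v ^ 2 ≤ dotp v h := by
    rw [← dotp_mulVec_left, dotp_self]
    exact (hΦ.2.2 v hv).1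
  have hcs : dotp v h ≤ l2 v * l2 (restr (supp v) h) := by
    conv_lhs => rw [← restr_supp_self v, dotp_restr_comm]
    exact dotp_le_l2_mul_l2 _ _
  have h1δ : 0 ≤ 1 - δ := by linarith [hΦ.2.1]
  rw [← l2_restr_sq, ← mul_pow]
  refine sq_le_sq_of_sq_le_mul ?_
  calc ((1 - δ) * l2 v) ^ 2 = (1 - δ) * ((1 - δ) * l2 v ^ 2) := by ring
    _ ≤ (1 - δ) * (l2 v * l2 (restr (supp v) h)) :=
        mul_le_mul_of_nonneg_left (hlow.trans hcs) h1δ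
    _ = (1 - δ) * l2 v * l2 (restr (supp v) h) := by ring

lemma sum_sq_le_of_disjoint (hΦ : RIP K Φ δ) {v : Fin N → ℝ} {T : Finset (Fin N)}
    (hT : Disjoint T (supp v)) (hcard : (T ∪ supp v).card ≤ K) :
    ∑ j ∈ T, (Φᵀ.mulVec (Φ.mulVec v)) j ^ 2 ≤ δ ^ 2 * l2 v ^ 2 := by
  set h := Φᵀ.mulVec (Φ.mulVec v)
  set w := restr T h
  have hw : supp w ⊆ T := supp_restr_subset T h
  have hwv : dotp w v = 0 := dotp_eq_zero_of_disjoint (hT.mono_left hw)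
  have hbound : l2 w ^ 2 ≤ l2 w * (δ * l2 v) := by
    calc l2 w ^ 2 = dotp (Φ.mulVec w) (Φ.mulVec v) - dotp w v := by
          rw [hwv, sub_zero, dotp_mulVec_left, dotp_restr_left, l2_restr_sq]
          simp only [h, sq]
      _ ≤ δ * l2 w * l2 v :=
          hΦ.dotp_sub_le ((Finset.card_le_card (Finset.union_subset_union hw le_rfl)).trans hcard)
      _ = l2 w * (δ * l2 v) := by ring
  rw [← l2_restr_sq, ← mul_pow]
  exact sq_le_sq_of_sq_le_mul hbound

end RIP

def IsRegular {α : Type*} (u : α → ℝ) (R : Finset α) : Prop :=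
  ∀ i ∈ R, ∀ j ∈ R, |u i| ≤ 2 * |u j|

lemma one_le_logb_two {K : ℕ} (hK : 2 ≤ K) : 1 ≤ Real.logb 2 K := by
  rw [Real.le_logb_iff_rpow_le one_lt_two (by positivity), Real.rpow_one]
  exact_mod_cast hK

lemma div_two_pow_floor_logb_bounds {A t : ℝ} (ht : 0 < t) (htA : t ≤ A) :
    A / 2 ^ (⌊Real.logb 2 (A / t)⌋₊ + 1) < t ∧ t ≤ A / 2 ^ ⌊Real.logb 2 (A / t)⌋₊ := by
  set k := ⌊Real.logb 2 (A / t)⌋₊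
  have hr : 1 ≤ A / t := (one_le_div ht).2 htA
  have hk1 : (2 : ℝ) ^ k ≤ A / t := by
    have := Nat.floor_le (Real.logb_nonneg one_lt_two hr)
    rwa [Real.le_logb_iff_rpow_le one_lt_two (by linarith), Real.rpow_natCast] at this
  have hk2 : A / t < 2 ^ (k + 1) := by
    have := Nat.lt_floor_add_one (Real.logb 2 (A / t))
    rwa [Real.logb_lt_iff_lt_rpow one_lt_two (by linarith), ← Nat.cast_succ,
      Real.rpow_natCast] at this
  rw [div_lt_iff₀ ht] at hk2
  rw [le_div_iff₀ ht] at hk1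
  constructor
  · rw [div_lt_iff₀ (by positivity)]
    linarith
  · rw [le_div_iff₀ (by positivity)]
    linarith

/-- Pigeonhole over the dyadic levels `A / 2 ^ (k + 1) < |u i| ≤ A / 2 ^ k`, `k < m`. -/
lemma exists_isRegular_subset_of_dyadic {α : Type*} (u : α → ℝ) (Ω : Finset α) {A : ℝ}
    (hA : ∀ i ∈ Ω, |u i| ≤ A) {m : ℕ} (hm : 0 < m) :
    ∃ B ⊆ Ω, IsRegular u B ∧ ∑ i ∈ Ω with A / 2 ^ m < |u i|, u i ^ 2 ≤ m * ∑ i ∈ B, u i ^ 2 := by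
  classical
  set s := Ω.filter fun i => A / 2 ^ m < |u i|
  set level : α → ℕ := fun i => ⌊Real.logb 2 (A / |u i|)⌋₊
  have hpos : ∀ i ∈ s, 0 < |u i| ∧ 0 < A := by
    intro i hi
    obtain ⟨hiΩ, hi⟩ := Finset.mem_filter.1 hi
    have hui : 0 < |u i| := lt_of_le_of_lt (div_nonneg ((abs_nonneg _).trans (hA i hiΩ))
      (by positivity)) hi
    exact ⟨hui, hui.trans_le (hA i hiΩ)⟩
  have hlevel : ∀ i ∈ s, A / 2 ^ (level i + 1) < |u i| ∧ |u i| ≤ A / 2 ^ level i := fun i hi =>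
    div_two_pow_floor_logb_bounds (hpos i hi).1 (hA i (Finset.mem_filter.1 hi).1)
  have hmaps : ∀ i ∈ s, level i ∈ Finset.range m := by
    intro i hi
    have hlt : A / 2 ^ m < A / 2 ^ level i := (Finset.mem_filter.1 hi).2.trans_le (hlevel i hi).2
    rw [div_lt_div_iff_of_pos_left (hpos i hi).2 (by positivity) (by positivity),
      pow_lt_pow_iff_right₀ one_lt_two] at hlt
    exact Finset.mem_range.2 hlt
  obtain ⟨k, -, hk⟩ := Finset.exists_le_sum_fiber_of_maps_to_of_nsmul_le_sum hmaps
    (Finset.nonempty_range_iff.2 hm.ne') (w := fun i => u i ^ 2)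
    (b := (∑ i ∈ s, u i ^ 2) / m)
    (by rw [Finset.card_range, nsmul_eq_mul, mul_div_cancel₀ _ (by exact_mod_cast hm.ne')])
  refine ⟨s.filter (level · = k), (Finset.filter_subset _ _).trans (Finset.filter_subset _ _),
    ?_, (div_le_iff₀' (by exact_mod_cast hm)).1 hk⟩
  intro i hi j hj
  obtain ⟨his, hik⟩ := Finset.mem_filter.1 hi
  obtain ⟨hjs, hjk⟩ := Finset.mem_filter.1 hj
  calc |u i| ≤ A / 2 ^ level i := (hlevel i his).2
    _ = 2 * (A / 2 ^ (level j + 1)) := by rw [hik, hjk, pow_succ]; ring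
    _ ≤ 2 * |u j| := by linarith [(hlevel j hjs).1]

lemma four_mul_le_four_pow_ceil {K : ℕ} (hK : 0 < K) :
    (4 : ℝ) * K ≤ 4 ^ (⌈Real.logb 2 K / 2⌉₊ + 1) := by
  set c := ⌈Real.logb 2 K / 2⌉₊
  have hK2 : (K : ℝ) = 2 ^ Real.logb 2 K :=
    (Real.rpow_logb two_pos (by norm_num) (by exact_mod_cast hK)).symm
  have hc : (2 : ℝ) ^ Real.logb 2 K ≤ 2 ^ ((2 * c : ℕ) : ℝ) :=
    Real.rpow_le_rpow_of_exponent_le one_le_two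
      (by push_cast; linarith [Nat.le_ceil (Real.logb 2 K / 2)])
  rw [Real.rpow_natCast, pow_mul] at hc
  rw [pow_succ, hK2]
  norm_num at hc ⊢
  linarith

/-- With `A` the largest entry and `m = ⌈log₂ K / 2⌉ + 1 ≤ 2.5 log₂ K`, the entries below
`A / 2 ^ m` carry at most a quarter of the energy. -/
lemma exists_isRegular_subset {α : Type*} (u : α → ℝ) (Ω : Finset α) {K : ℕ} (hK : 2 ≤ K)
    (hΩ : Ω.card ≤ K) :
    ∃ B ⊆ Ω, IsRegular u B ∧ 0.3 / Real.logb 2 K * ∑ i ∈ Ω, u i ^ 2 ≤ ∑ i ∈ B, u i ^ 2 := by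
  classical
  rcases Ω.eq_empty_or_nonempty with rfl | hne
  · exact ⟨∅, subset_rfl, by simp [IsRegular], by simp⟩
  obtain ⟨i₀, hi₀, hmax⟩ := Ω.exists_max_image (fun i => |u i|) hne
  set A := |u i₀|
  set L := Real.logb 2 K
  set m := ⌈L / 2⌉₊ + 1
  have hL : 1 ≤ L := one_le_logb_two hK
  have hAE : A ^ 2 ≤ ∑ i ∈ Ω, u i ^ 2 := by
    rw [sq_abs]
    exact Finset.single_le_sum (fun i _ => sq_nonneg (u i)) hi₀
  have hmL : (m : ℝ) ≤ 2.5 * L := by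
    have := Nat.ceil_lt_add_one (by positivity : 0 ≤ L / 2)
    push_cast [m]
    linarith
  have hsmall : ∑ i ∈ Ω with ¬A / 2 ^ m < |u i|, u i ^ 2 ≤ (∑ i ∈ Ω, u i ^ 2) / 4 := by
    calc ∑ i ∈ Ω with ¬A / 2 ^ m < |u i|, u i ^ 2
        ≤ (Ω.filter fun i => ¬A / 2 ^ m < |u i|).card • (A / 2 ^ m) ^ 2 := by
          refine Finset.sum_le_card_nsmul _ _ _ fun i hi => ?_
          rw [← sq_abs]
          exact pow_le_pow_left₀ (abs_nonneg _) (not_lt.1 (Finset.mem_filter.1 hi).2) 2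
      _ ≤ K * (A ^ 2 / 4 ^ m) := by
          rw [nsmul_eq_mul, div_pow, ← pow_mul, mul_comm m, pow_mul]
          norm_num
          gcongr
          exact_mod_cast (Finset.card_filter_le _ _).trans hΩ
      _ ≤ (∑ i ∈ Ω, u i ^ 2) / 4 := by
          rw [mul_div_assoc', div_le_div_iff₀ (by positivity) (by norm_num)]
          have := mul_le_mul (four_mul_le_four_pow_ceil (by omega : 0 < K)) hAE (sq_nonneg A)
            (by positivity)
          linarith
  obtain ⟨B, hBΩ, hBreg, hB⟩ := exists_isRegular_subset_of_dyadic u Ω hmax (m := m) (Nat.succ_pos _)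
  refine ⟨B, hBΩ, hBreg, ?_⟩
  have hsplit := Finset.sum_filter_add_sum_filter_not Ω (fun i => A / 2 ^ m < |u i|)
    fun i => u i ^ 2
  have hB0 : 0 ≤ ∑ i ∈ B, u i ^ 2 := Finset.sum_nonneg fun i _ => sq_nonneg _
  rw [div_mul_eq_mul_div, div_le_iff₀ (zero_lt_one.trans_le hL)]
  nlinarith [mul_le_mul_of_nonneg_right hmL hB0]

namespace IsRegular

variable {α : Type*} {u : α → ℝ} {R : Finset α}

lemma ne_zero (hR : IsRegular u R) {i : α} (hi : i ∈ R) (hui : u i ≠ 0) {j : α} (hj : j ∈ R) :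
    u j ≠ 0 := by
  intro huj
  have := hR i hi j hj
  rw [huj, abs_zero, mul_zero, abs_nonpos_iff] at this
  exact hui this

lemma card_lt (hR : IsRegular u R) {P Q : Finset α} (hP : P ⊆ R) (hQ : Q ⊆ R) {k : ℕ}
    (h : 4 * k * ∑ j ∈ Q, u j ^ 2 < ∑ i ∈ P, u i ^ 2) : k * Q.card < P.card := by
  have hPpos : 0 < ∑ i ∈ P, u i ^ 2 :=
    lt_of_le_of_lt (mul_nonneg (by positivity) (Finset.sum_nonneg fun _ _ => sq_nonneg _)) h
  obtain ⟨i, hi, -⟩ := Finset.exists_ne_zero_of_sum_ne_zero hPpos.ne'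
  obtain ⟨j₀, hj₀, hmin⟩ := R.exists_min_image (fun j => |u j|) ⟨i, hP hi⟩
  have hQt : Q.card * u j₀ ^ 2 ≤ ∑ j ∈ Q, u j ^ 2 := by
    rw [← nsmul_eq_mul]
    exact Finset.card_nsmul_le_sum _ _ _ fun j hj => sq_le_sq.2 (hmin j (hQ hj))
  have hPt : ∑ i ∈ P, u i ^ 2 ≤ P.card * (4 * u j₀ ^ 2) := by
    rw [← nsmul_eq_mul]
    refine Finset.sum_le_card_nsmul _ _ _ fun i hi => ?_
    calc u i ^ 2 = |u i| ^ 2 := (sq_abs _).symm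
      _ ≤ (2 * |u j₀|) ^ 2 := pow_le_pow_left₀ (abs_nonneg _) (hR i (hP hi) j₀ hj₀) 2
      _ = 4 * u j₀ ^ 2 := by rw [mul_pow, sq_abs]; norm_num
  have hlt : (k * Q.card : ℝ) * (4 * u j₀ ^ 2) < P.card * (4 * u j₀ ^ 2) := by
    nlinarith
  exact_mod_cast lt_of_mul_lt_mul_right hlt (by positivity)

end IsRegular

lemma sum_le_sum_of_card_le_of_forall_le {α : Type*} {s t : Finset α} {f : α → ℝ}
    (hst : s.card ≤ t.card) (hle : ∀ a ∈ s, ∀ b ∈ t, f a ≤ f b) (hf : ∀ b ∈ t, 0 ≤ f b) :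
    ∑ a ∈ s, f a ≤ ∑ b ∈ t, f b := by
  rcases t.eq_empty_or_nonempty with rfl | ht
  · rw [Finset.card_eq_zero.1 (Nat.le_zero.1 hst)]
  refine le_of_mul_le_mul_left ?_ (Nat.cast_pos.2 ht.card_pos : (0 : ℝ) < t.card)
  calc (t.card : ℝ) * ∑ a ∈ s, f a = ∑ a ∈ s, ∑ _b ∈ t, f a := by
        simp [Finset.mul_sum]
    _ ≤ ∑ _a ∈ s, ∑ b ∈ t, f b :=
        Finset.sum_le_sum fun a ha => Finset.sum_le_sum fun b hb => hle a ha b hb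
    _ = s.card * ∑ b ∈ t, f b := by simp
    _ ≤ t.card * ∑ b ∈ t, f b :=
        mul_le_mul_of_nonneg_right (by exact_mod_cast hst) (Finset.sum_nonneg hf)

def IsTopK {n : ℕ} (K : ℕ) (h : Fin n → ℝ) (Ω : Finset (Fin n)) : Prop :=
  (K ≤ (supp h).card ∧ Ω.card = K ∧ ∀ i ∈ Ω, ∀ j ∉ Ω, |h j| ≤ |h i|) ∨
    ((supp h).card < K ∧ Ω = supp h)

namespace IsTopK

variable {n K : ℕ} {h : Fin n → ℝ} {Ω : Finset (Fin n)}

lemma card_le (hΩ : IsTopK K h Ω) : Ω.card ≤ K := by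
  rcases hΩ with ⟨-, hcard, -⟩ | ⟨hcard, rfl⟩ <;> omega

lemma sum_sq_le (hΩ : IsTopK K h Ω) {T : Finset (Fin n)} (hT : T.card ≤ K) :
    ∑ j ∈ T, h j ^ 2 ≤ ∑ j ∈ Ω, h j ^ 2 := by
  rcases hΩ with ⟨-, hcard, htop⟩ | ⟨-, rfl⟩
  · have hsdiff : ∑ j ∈ T \ Ω, h j ^ 2 ≤ ∑ j ∈ Ω \ T, h j ^ 2 := by
      refine sum_le_sum_of_card_le_of_forall_le ?_ (fun a ha b hb => ?_) fun _ _ => sq_nonneg _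
      · rw [Finset.card_sdiff, Finset.card_sdiff, Finset.inter_comm]
        omega
      · exact sq_le_sq.2 (htop b (Finset.mem_sdiff.1 hb).1 a (Finset.mem_sdiff.1 ha).2)
    rw [← Finset.sum_inter_add_sum_sdiff T Ω, ← Finset.sum_inter_add_sum_sdiff Ω T,
      Finset.inter_comm]
    linarith
  · calc ∑ j ∈ T, h j ^ 2 ≤ ∑ j ∈ T ∪ supp h, h j ^ 2 :=
          Finset.sum_le_sum_of_subset_of_nonneg Finset.subset_union_left
            fun _ _ _ => sq_nonneg _
      _ = ∑ j ∈ supp h, h j ^ 2 := by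
          refine (Finset.sum_subset Finset.subset_union_right fun j _ hj => ?_).symm
          rw [mem_supp, not_not] at hj
          simp [hj]

end IsTopK

def IsLeastSquares {M N : ℕ} (Φ : Matrix (Fin M) (Fin N) ℝ) (b : Fin M → ℝ)
    (Λ : Finset (Fin N)) (xs : Fin N → ℝ) : Prop :=
  supp xs ⊆ Λ ∧ ∀ z : Fin N → ℝ, supp z ⊆ Λ → l2 (b - Φ.mulVec xs) ≤ l2 (b - Φ.mulVec z)

namespace IsLeastSquares

variable {M N : ℕ} {Φ : Matrix (Fin M) (Fin N) ℝ} {b : Fin M → ℝ} {Λ : Finset (Fin N)}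
  {xs : Fin N → ℝ}

lemma mulVec_transpose_eq_zero (hls : IsLeastSquares Φ b Λ xs) {j : Fin N} (hj : j ∈ Λ) :
    (Φᵀ.mulVec (b - Φ.mulVec xs)) j = 0 := by
  set r := b - Φ.mulVec xs
  set e : Fin N → ℝ := Pi.single j 1
  set g := (Φᵀ.mulVec r) j
  have he : supp e ⊆ Λ := fun i hi => by
    by_cases hij : i = j
    · exact hij ▸ hj
    · simp [mem_supp, e, hij] at hi
  have hg : dotp r (Φ.mulVec e) = g := by
    rw [dotp_comm, dotp_mulVec_left]
    simp [dotp, e, Pi.single_apply, g]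
  -- moving `xs` along `e` cannot decrease the residual
  have hquad : ∀ t : ℝ, 0 ≤ l2 (Φ.mulVec e) ^ 2 * (t * t) + (-2 * g) * t + 0 := by
    intro t
    have hz := hls.2 (xs + t • e)
      ((supp_add_subset _ _).trans (Finset.union_subset hls.1 ((supp_smul_subset t e).trans he)))
    have hres : b - Φ.mulVec (xs + t • e) = r - t • Φ.mulVec e := by
      rw [Matrix.mulVec_add, Matrix.mulVec_smul, sub_add_eq_sub_sub]
    rw [hres] at hz
    have hsq := pow_le_pow_left₀ (l2_nonneg _) hz 2
    rw [l2_sub_sq r, dotp_smul_right, hg, l2_smul, mul_pow, sq_abs] at hsq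
    linarith
  have hdisc := discrim_le_zero hquad
  rw [discrim] at hdisc
  nlinarith [sq_nonneg g]

lemma mem_supp_sub_iff (hls : IsLeastSquares Φ b Λ xs) (x : Fin N → ℝ) {j : Fin N} (hj : j ∉ Λ) :
    j ∈ supp (x - xs) ↔ j ∈ supp x := by
  have : xs j = 0 := by
    by_contra hxs
    exact hj (hls.1 (mem_supp.2 hxs))
  simp [mem_supp, this]

end IsLeastSquares

lemma RIP.eq_of_isLeastSquares {M N K : ℕ} {Φ : Matrix (Fin M) (Fin N) ℝ} {δ : ℝ}
    (hΦ : RIP K Φ δ) {Λ : Finset (Fin N)} (hΛ : Λ.card ≤ K) {x xs : Fin N → ℝ}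
    (hx : supp x ⊆ Λ) (hls : IsLeastSquares Φ (Φ.mulVec x) Λ xs) : xs = x := by
  have hΦv : l2 (Φ.mulVec (x - xs)) = 0 := by
    refine le_antisymm ?_ (l2_nonneg _)
    simpa [Matrix.mulVec_sub, l2] using hls.2 x hx
  have hcard : (supp (x - xs)).card ≤ K :=
    (Finset.card_le_card ((supp_sub_subset x xs).trans (Finset.union_subset hx hls.1))).trans hΛ
  have hlow := (hΦ.2.2 _ hcard).1
  rw [hΦv, zero_pow two_ne_zero] at hlow
  have hv : l2 (x - xs) ^ 2 = 0 :=
    le_antisymm (nonpos_of_mul_nonpos_right hlow (sub_pos.2 hΦ.2.1)) (sq_nonneg _)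
  exact (sub_eq_zero.1 (l2_eq_zero_iff.1 (pow_eq_zero_iff two_ne_zero |>.1 hv))).symm

def IsMaxRegularSubset {n : ℕ} (h : Fin n → ℝ) (Ω Ω₀ : Finset (Fin n)) : Prop :=
  Ω₀ ⊆ Ω ∧ IsRegular h Ω₀ ∧ ∀ Ω' ⊆ Ω, IsRegular h Ω' → l2 (restr Ω' h) ≤ l2 (restr Ω₀ h)

lemma IsMaxRegularSubset.sum_sq_le {n : ℕ} {h : Fin n → ℝ} {Ω Ω₀ B : Finset (Fin n)}
    (hΩ₀ : IsMaxRegularSubset h Ω Ω₀) (hB : B ⊆ Ω) (hBreg : IsRegular h B) :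
    ∑ j ∈ B, h j ^ 2 ≤ ∑ j ∈ Ω₀, h j ^ 2 := by
  rw [← l2_restr_sq, ← l2_restr_sq]
  exact pow_le_pow_left₀ (l2_nonneg _) (hΩ₀.2.2 B hB hBreg) 2

/-- The role of `0.13`: `13 δ² log₂ K ≤ 13 · 0.13² = 0.2197 < 0.3 · 0.87²`. -/
lemma thirteen_mul_sq_mul_logb_lt {K : ℕ} (hK : 2 ≤ K) {δ : ℝ} (hδ0 : 0 < δ)
    (hδ : δ ≤ 0.13 / Real.sqrt (Real.logb 2 K)) :
    13 * δ ^ 2 * Real.logb 2 K < 0.3 * (1 - δ) ^ 2 := by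
  have hL := one_le_logb_two hK
  have hδ13 : δ ≤ 0.13 := hδ.trans (div_le_self (by norm_num) (Real.one_le_sqrt.2 hL))
  have hδL : δ ^ 2 * Real.logb 2 K ≤ 0.13 ^ 2 := by
    have := pow_le_pow_left₀ hδ0.le hδ 2
    rwa [div_pow, Real.sq_sqrt (by linarith), le_div_iff₀ (by linarith)] at this
  nlinarith [mul_nonneg (sub_nonneg.2 hδ13) (by linarith : (0 : ℝ) ≤ 1.87 - δ)]

theorem romp_energy_gap {M N K : ℕ} {Φ : Matrix (Fin M) (Fin N) ℝ} {δ : ℝ} (hK : 2 ≤ K)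
    (hΦ : RIP (3 * K) Φ δ) (hδ : 13 * δ ^ 2 * Real.logb 2 K < 0.3 * (1 - δ) ^ 2)
    {v : Fin N → ℝ} (hv : v ≠ 0) (hvcard : (supp v).card ≤ 2 * K) {Λ Ω Ω₀ : Finset (Fin N)}
    (horth : ∀ j ∈ Λ, (Φᵀ.mulVec (Φ.mulVec v)) j = 0) (hvΛ : (supp v \ Λ).card ≤ K)
    (hΩ : IsTopK K (Φᵀ.mulVec (Φ.mulVec v)) Ω)
    (hΩ₀ : IsMaxRegularSubset (Φᵀ.mulVec (Φ.mulVec v)) Ω Ω₀) :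
    12 * ∑ j ∈ Ω₀ \ supp v, (Φᵀ.mulVec (Φ.mulVec v)) j ^ 2 <
      ∑ j ∈ Ω₀ ∩ supp v, (Φᵀ.mulVec (Φ.mulVec v)) j ^ 2 := by
  set h := Φᵀ.mulVec (Φ.mulVec v)
  have hL : 0 < Real.logb 2 K := zero_lt_one.trans_le (one_le_logb_two hK)
  have hV : 0 < l2 v ^ 2 := pow_pos ((l2_nonneg v).lt_of_ne' (mt l2_eq_zero_iff.1 hv)) 2
  have hΛ0 : ∑ j ∈ supp v ∩ Λ, h j ^ 2 = 0 :=
    Finset.sum_eq_zero fun j hj => by rw [horth j (Finset.mem_inter.1 hj).2, sq, mul_zero]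
  have hΩenergy : (1 - δ) ^ 2 * l2 v ^ 2 ≤ ∑ j ∈ Ω, h j ^ 2 :=
    calc (1 - δ) ^ 2 * l2 v ^ 2 ≤ ∑ j ∈ supp v, h j ^ 2 :=
          hΦ.one_sub_sq_mul_le_sum_sq (by omega)
      _ = ∑ j ∈ supp v \ Λ, h j ^ 2 := by
          rw [← Finset.sum_inter_add_sum_sdiff (supp v) Λ, hΛ0, zero_add]
      _ ≤ ∑ j ∈ Ω, h j ^ 2 := hΩ.sum_sq_le hvΛ
  obtain ⟨B, hBΩ, hBreg, hB⟩ := exists_isRegular_subset h Ω hK hΩ.card_le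
  have hΩ₀energy : 0.3 / Real.logb 2 K * ((1 - δ) ^ 2 * l2 v ^ 2) ≤ ∑ j ∈ Ω₀, h j ^ 2 :=
    (mul_le_mul_of_nonneg_left hΩenergy (by positivity)).trans
      (hB.trans (hΩ₀.sum_sq_le hBΩ hBreg))
  have hoff : ∑ j ∈ Ω₀ \ supp v, h j ^ 2 ≤ δ ^ 2 * l2 v ^ 2 := by
    refine hΦ.sum_sq_le_of_disjoint Finset.sdiff_disjoint ((Finset.card_union_le _ _).trans ?_)
    have := (Finset.card_le_card ((Finset.sdiff_subset (t := supp v)).trans hΩ₀.1)).trans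
      hΩ.card_le
    omega
  have hgap : 13 * (δ ^ 2 * l2 v ^ 2) < 0.3 / Real.logb 2 K * ((1 - δ) ^ 2 * l2 v ^ 2) := by
    rw [div_mul_eq_mul_div, lt_div_iff₀ hL]
    nlinarith
  have hsplit := Finset.sum_inter_add_sum_sdiff Ω₀ (supp v) fun j => h j ^ 2
  linarith

def RecoveryInvariant {α : Type*} [DecidableEq α] (S : Finset α) (n : ℕ) (Λ : Finset α) : Prop :=
  3 * (Λ \ S).card ≤ (Λ ∩ S).card ∧ n ≤ (Λ ∩ S).card

namespace RecoveryInvariant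

variable {α : Type*} [DecidableEq α] {S Λ : Finset α} {n : ℕ}

lemma union {Ω₀ : Finset α} (hinv : RecoveryInvariant S n Λ) (hdisj : Disjoint Ω₀ Λ)
    (hnew : 3 * (Ω₀ \ S).card < (Ω₀ ∩ S).card) : RecoveryInvariant S (n + 1) (Λ ∪ Ω₀) := by
  obtain ⟨hcorrect, hn⟩ := hinv
  have hinter : ((Λ ∪ Ω₀) ∩ S).card = (Λ ∩ S).card + (Ω₀ ∩ S).card := by
    rw [Finset.union_inter_distrib_right, Finset.card_union_of_disjoint]
    exact hdisj.symm.mono Finset.inter_subset_left Finset.inter_subset_left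
  have hsdiff : ((Λ ∪ Ω₀) \ S).card ≤ (Λ \ S).card + (Ω₀ \ S).card := by
    rw [Finset.union_sdiff_distrib]
    exact Finset.card_union_le _ _
  constructor <;> omega

lemma card_sdiff_le (hinv : RecoveryInvariant S n Λ) {K : ℕ} (hS : S.card ≤ K) :
    (Λ \ S).card ≤ K := by
  have := Finset.card_le_card (Finset.inter_subset_right (s₁ := Λ) (s₂ := S))
  have := hinv.1
  omega

lemma card_le (hinv : RecoveryInvariant S n Λ) {K : ℕ} (hS : S.card ≤ K) : Λ.card ≤ 2 * K := by
  have := Finset.card_inter_add_card_sdiff Λ S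
  have := Finset.card_le_card (Finset.inter_subset_right (s₁ := Λ) (s₂ := S))
  have := hinv.card_sdiff_le hS
  omega

lemma supp_subset (hinv : RecoveryInvariant S n Λ) (hS : S.card ≤ n) : S ⊆ Λ := by
  have := Finset.eq_of_subset_of_card_le Finset.inter_subset_right (hS.trans hinv.2)
  exact this ▸ Finset.inter_subset_left

end RecoveryInvariant

lemma RecoveryInvariant.card_supp_sub_le {N K n : ℕ} {Λ : Finset (Fin N)} {x xs : Fin N → ℝ}
    (hinv : RecoveryInvariant (supp x) n Λ) (hsp : (supp x).card ≤ K) (hxs : supp xs ⊆ Λ) :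
    (supp (x - xs)).card ≤ 2 * K := by
  have hsub : supp (x - xs) ⊆ (Λ \ supp x) ∪ supp x := by
    rw [Finset.sdiff_union_self_eq_union, Finset.union_comm]
    exact (supp_sub_subset x xs).trans (Finset.union_subset_union_right hxs)
  have := (Finset.card_le_card hsub).trans (Finset.card_union_le _ _)
  have := hinv.card_sdiff_le hsp
  omega

lemma inter_eq_and_sdiff_eq_of_forall_mem_iff {α : Type*} [DecidableEq α] {T A B : Finset α}
    (h : ∀ j ∈ T, (j ∈ A ↔ j ∈ B)) : T ∩ A = T ∩ B ∧ T \ A = T \ B := by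
  constructor <;> ext j <;> simp only [Finset.mem_inter, Finset.mem_sdiff]
  · exact and_congr_right (h j)
  · exact and_congr_right fun hj => not_congr (h j hj)

theorem romp_invariant_step {M N K : ℕ} {Φ : Matrix (Fin M) (Fin N) ℝ} {δ : ℝ} (hK : 2 ≤ K)
    (hΦ : RIP (3 * K) Φ δ) (hδ : 13 * δ ^ 2 * Real.logb 2 K < 0.3 * (1 - δ) ^ 2)
    {x xs : Fin N → ℝ} (hsp : (supp x).card ≤ K) {Λ Ω Ω₀ : Finset (Fin N)} {n : ℕ}
    (hls : IsLeastSquares Φ (Φ.mulVec x) Λ xs)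
    (hΩ : IsTopK K (Φᵀ.mulVec (Φ.mulVec x - Φ.mulVec xs)) Ω)
    (hΩ₀ : IsMaxRegularSubset (Φᵀ.mulVec (Φ.mulVec x - Φ.mulVec xs)) Ω Ω₀) (hne : xs ≠ x)
    (hinv : RecoveryInvariant (supp x) n Λ) : RecoveryInvariant (supp x) (n + 1) (Λ ∪ Ω₀) := by
  have hr : Φ.mulVec x - Φ.mulVec xs = Φ.mulVec (x - xs) := (Matrix.mulVec_sub _ _ _).symm
  rw [hr] at hΩ hΩ₀
  set h := Φᵀ.mulVec (Φ.mulVec (x - xs))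
  have horth : ∀ j ∈ Λ, h j = 0 := fun j hj => by
    have := hls.mulVec_transpose_eq_zero hj
    rwa [hr] at this
  have hvcard := hinv.card_supp_sub_le hsp hls.1
  have hvΛ : (supp (x - xs) \ Λ).card ≤ K := by
    refine (Finset.card_le_card fun j hj => ?_).trans hsp
    obtain ⟨hjv, hjΛ⟩ := Finset.mem_sdiff.1 hj
    exact (hls.mem_supp_sub_iff x hjΛ).1 hjv
  have hgap := romp_energy_gap hK hΦ hδ (sub_ne_zero.2 hne.symm) hvcard horth hvΛ hΩ hΩ₀
  have hdisj : Disjoint Ω₀ Λ := by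
    obtain ⟨i, hi, hhi⟩ := Finset.exists_ne_zero_of_sum_ne_zero
      (lt_of_le_of_lt (by positivity) hgap).ne'
    exact Finset.disjoint_left.2 fun j hj hjΛ => hΩ₀.2.1.ne_zero (Finset.inter_subset_left hi)
      (pow_ne_zero_iff two_ne_zero |>.1 hhi) hj (horth j hjΛ)
  obtain ⟨hinter, hsdiff⟩ := inter_eq_and_sdiff_eq_of_forall_mem_iff fun j hj =>
    hls.mem_supp_sub_iff x (Finset.disjoint_left.1 hdisj hj)
  refine hinv.union hdisj ?_
  rw [hinter, hsdiff] at hgap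
  exact hΩ₀.2.1.card_lt Finset.inter_subset_left Finset.sdiff_subset (by push_cast; linarith)

/-- exact recovery of `K`-sparse signals by ROMP under the RIP of
order `3K` with `δ ≤ 0.13/√(log₂ K)`. -/
theorem stmt15 {M N K : ℕ} (Φ : Matrix (Fin M) (Fin N) ℝ) (δ : ℝ) (x : Fin N → ℝ)
    (hK : 2 ≤ K)
    (hRIP : RIP (3 * K) Φ δ) (hδ : δ ≤ 0.13 / Real.sqrt (Real.logb 2 K))
    (hsp : (supp x).card ≤ K)
    (y : Fin M → ℝ) (hy : y = Φ.mulVec x)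
    (Λ : ℕ → Finset (Fin N)) (xs : ℕ → Fin N → ℝ) (Ω : ℕ → Finset (Fin N))
    (Ω₀ : ℕ → Finset (Fin N))
    (hΛ0 : Λ 0 = ∅)
    -- least-squares update
    (hls : ∀ ℓ, supp (xs ℓ) ⊆ Λ ℓ ∧
      ∀ z : Fin N → ℝ, supp z ⊆ Λ ℓ →
        l2 (y - Φ.mulVec (xs ℓ)) ≤ l2 (y - Φ.mulVec z))
    -- Ω ℓ consists of the K largest-magnitude entries of h ℓ, or supp (h ℓ) if it
    -- has fewer than K nonzero entries
    (hΩ : ∀ ℓ,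
      ((K ≤ (supp (Φᵀ.mulVec (y - Φ.mulVec (xs ℓ)))).card ∧ (Ω ℓ).card = K ∧
          ∀ i ∈ Ω ℓ, ∀ j ∉ Ω ℓ,
            |(Φᵀ.mulVec (y - Φ.mulVec (xs ℓ))) j| ≤ |(Φᵀ.mulVec (y - Φ.mulVec (xs ℓ))) i|) ∨
        ((supp (Φᵀ.mulVec (y - Φ.mulVec (xs ℓ)))).card < K ∧
          Ω ℓ = supp (Φᵀ.mulVec (y - Φ.mulVec (xs ℓ))))))
    -- Ω₀ ℓ is a regularized subset of Ω ℓ of maximal energy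
    (hΩ₀ : ∀ ℓ, Ω₀ ℓ ⊆ Ω ℓ ∧
      (∀ i ∈ Ω₀ ℓ, ∀ j ∈ Ω₀ ℓ,
        |(Φᵀ.mulVec (y - Φ.mulVec (xs ℓ))) i| ≤ 2 * |(Φᵀ.mulVec (y - Φ.mulVec (xs ℓ))) j|) ∧
      ∀ Ω' ⊆ Ω ℓ, (∀ i ∈ Ω', ∀ j ∈ Ω',
          |(Φᵀ.mulVec (y - Φ.mulVec (xs ℓ))) i| ≤ 2 * |(Φᵀ.mulVec (y - Φ.mulVec (xs ℓ))) j|) →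
        l2 (restr Ω' (Φᵀ.mulVec (y - Φ.mulVec (xs ℓ)))) ≤
          l2 (restr (Ω₀ ℓ) (Φᵀ.mulVec (y - Φ.mulVec (xs ℓ)))))
    (hstep : ∀ ℓ, Λ (ℓ + 1) = Λ ℓ ∪ Ω₀ ℓ) :
    ∃ ℓ ≤ K, supp x ⊆ Λ ℓ ∧ xs ℓ = x := by
  subst hy
  have hδ' := thirteen_mul_sq_mul_logb_lt hK hRIP.1 hδ
  by_cases hdone : ∃ ℓ < K, xs ℓ = x
  · obtain ⟨ℓ, hℓ, rfl⟩ := hdone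
    exact ⟨ℓ, hℓ.le, (hls ℓ).1, rfl⟩
  push Not at hdone
  have hinv : ∀ ℓ ≤ K, RecoveryInvariant (supp x) ℓ (Λ ℓ) := by
    intro ℓ hℓ
    induction ℓ with
    | zero => simp [RecoveryInvariant, hΛ0]
    | succ ℓ ih =>
      rw [hstep ℓ]
      exact romp_invariant_step hK hRIP hδ' hsp (hls ℓ) (hΩ ℓ) (hΩ₀ ℓ) (hdone ℓ hℓ)
        (ih (by omega))
  have hS := (hinv K le_rfl).supp_subset hsp
  exact ⟨K, le_rfl, hS, hRIP.eq_of_isLeastSquares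
    (((hinv K le_rfl).card_le hsp).trans (by omega)) hS (hls K)⟩

end OMP
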